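/- The relation ⊴ is a partial order on P_n: it is reflexive, antisymmetric, and transitive. -/

import Mathlib

/-- The total order on boxes `(i,l)`: `(i,l) ≤ (i',l')` iff `l < l'`, or `l = l'`
and `i ≤ i'`. -/
def bLE {p d : ℕ} (b b' : Fin p × Fin d) : Prop :=
  b.2 < b'.2 ∨ (b.2 = b'.2 ∧ b.1 ≤ b'.1)

/-- The strict version of the total order on boxes. -/
def bLT {p d : ℕ} (b b' : Fin p × Fin d) : Prop :=
  b.2 < b'.2 ∨ (b.2 = b'.2 ∧ b.1 < b'.1)

/-- The partial order `≤'` on boxes: `(i,l) ≤' (i',l')` iff `l < l'` or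
`(i,l) = (i',l')`. -/
def bLE' {p d : ℕ} (b b' : Fin p × Fin d) : Prop :=
  b.2 < b'.2 ∨ b = b'

/-- A 3D multipartition of `n` with at most two nonempty components: either a
single column of `n` nodes on a box, or two columns of sizes `c₁ ≥ 1` and
`n - c₁ ≥ 1` on boxes `b₁ < b₂` (in the total order). -/
inductive MP (p d n : ℕ) : Type where
  | single (b : Fin p × Fin d) : MP p d n
  | double (b₁ b₂ : Fin p × Fin d) (c₁ : ℕ)
      (hlt : bLT b₁ b₂) (hc1 : 1 ≤ c₁) (hc2 : c₁ < n) : MP p d n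

/-- The dominance-type relation on multipartitions associated to a relation `rB`
on boxes; with `rB = bLE` this is `⊴` and with `rB = bLE'` this is `⊴'`.
For doubles, `a = c₁ - c₂ = 2c₁ - n`. -/
def dom {p d n : ℕ} (rB : (Fin p × Fin d) → (Fin p × Fin d) → Prop) :
    MP p d n → MP p d n → Prop
  | .single b₁, .single b₂ => rB b₁ b₂
  | .single _, .double _ _ _ _ _ _ => False
  | .double b₁ _ _ _ _ _, .single b₃ => rB b₁ b₃
  | .double b₁ b₂ c _ _ _, .double b₃ b₄ c' _ _ _ =>
      rB b₁ b₃ ∧ rB b₂ b₄ ∧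
      (|2 * (c : ℤ) - n| < |2 * (c' : ℤ) - n| ∨
       (|2 * (c : ℤ) - n| = |2 * (c' : ℤ) - n| ∧ 2 * (c : ℤ) - n ≥ 2 * (c' : ℤ) - n) ∨
       (|2 * (c : ℤ) - n| = |2 * (c' : ℤ) - n| ∧ 2 * (c : ℤ) - n < 2 * (c' : ℤ) - n ∧
        rB b₂ b₃))

/-!
Reading a box `(i,l)` as the pair `(l,i)`, `bLE` is the lexicographic order, hence a linear
order. Between double shapes, `⊴` compares the first boxes, the second boxes, and the imbalances
`a = c₁ - c₂` by the key `(|a|, -a)`, except that `a = -b < 0 < b` is also allowed when the second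
box `b₂` of the smaller shape lies below the first box `b₃` of the larger. That exception is
inherited along chains (`b₂ ≤ b₃ ≤ b₅` and `b₂ ≤ b₄ ≤ b₅`), giving transitivity; under mutual
dominance the boxes coincide, and the exception would then need `b₂ ≤ b₁`, contradicting `b₁ < b₂`.
-/

section Boxes

variable {p d : ℕ}

def boxKey (b : Fin p × Fin d) : Fin d ×ₗ Fin p := toLex b.swap

lemma bLE_iff_boxKey_le {b b' : Fin p × Fin d} : bLE b b' ↔ boxKey b ≤ boxKey b' :=
  (Prod.Lex.toLex_le_toLex (x := b.swap) (y := b'.swap)).symm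

lemma bLT_iff_boxKey_lt {b b' : Fin p × Fin d} : bLT b b' ↔ boxKey b < boxKey b' :=
  (Prod.Lex.toLex_lt_toLex (x := b.swap) (y := b'.swap)).symm

lemma boxKey_injective : Function.Injective (boxKey : Fin p × Fin d → Fin d ×ₗ Fin p) :=
  toLex.injective.comp Prod.swap_injective

lemma bLE_refl (b : Fin p × Fin d) : bLE b b :=
  bLE_iff_boxKey_le.2 le_rfl

lemma bLE_trans {b b' b'' : Fin p × Fin d} (h : bLE b b') (g : bLE b' b'') : bLE b b'' :=
  bLE_iff_boxKey_le.2 ((bLE_iff_boxKey_le.1 h).trans (bLE_iff_boxKey_le.1 g))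

lemma bLE_antisymm {b b' : Fin p × Fin d} (h : bLE b b') (g : bLE b' b) : b = b' :=
  boxKey_injective ((bLE_iff_boxKey_le.1 h).antisymm (bLE_iff_boxKey_le.1 g))

lemma not_bLE_of_bLT {b b' : Fin p × Fin d} (h : bLT b b') : ¬ bLE b' b := fun g =>
  (bLT_iff_boxKey_lt.1 h).not_ge (bLE_iff_boxKey_le.1 g)

end Boxes

/-- The comparison in `dom` of the imbalances `2c - n` of two double shapes, with `P` the box
condition `(i₂,l₂) ≤ (i₃,l₃)`. -/
def ImbalanceLE (P : Prop) (A B : ℤ) : Prop :=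
  |A| < |B| ∨ (|A| = |B| ∧ A ≥ B) ∨ (|A| = |B| ∧ A < B ∧ P)

namespace ImbalanceLE

lemma refl (P : Prop) (A : ℤ) : ImbalanceLE P A A := Or.inr (Or.inl ⟨rfl, le_rfl⟩)

lemma antisymm {P Q : Prop} {A B : ℤ} (hP : ¬P) (hQ : ¬Q)
    (h : ImbalanceLE P A B) (g : ImbalanceLE Q B A) : A = B := by
  unfold ImbalanceLE at h g
  grind

lemma trans {P Q R : Prop} {A B C : ℤ} (hP : P → R) (hQ : Q → R)
    (h : ImbalanceLE P A B) (g : ImbalanceLE Q B C) : ImbalanceLE R A C := by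
  unfold ImbalanceLE at h g ⊢
  grind

end ImbalanceLE

section Dominance

variable {p d n : ℕ} {rB : Fin p × Fin d → Fin p × Fin d → Prop}

lemma dom_refl (hr : ∀ b, rB b b) : ∀ l : MP p d n, dom rB l l
  | .single b => hr b
  | .double b₁ b₂ .. => ⟨hr b₁, hr b₂, ImbalanceLE.refl _ _⟩

lemma dom_antisymm (hr : ∀ ⦃b b'⦄, rB b b' → rB b' b → b = b')
    (hlt : ∀ ⦃b b'⦄, bLT b b' → ¬ rB b' b) :
    ∀ ⦃l m : MP p d n⦄, dom rB l m → dom rB m l → l = m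
  | .single _, .single _, h, g => congrArg MP.single (hr h g)
  | .double _ b₂ c hb .., .double _ _ c' .., ⟨h₁₃, h₂₄, hc⟩, ⟨g₃₁, g₄₂, gc⟩ => by
    obtain rfl := hr h₁₃ g₃₁
    obtain rfl := hr h₂₄ g₄₂
    obtain rfl : c = c' := by have := ImbalanceLE.antisymm (hlt hb) (hlt hb) hc gc; omega
    rfl

lemma dom_trans (ht : ∀ ⦃b b' b''⦄, rB b b' → rB b' b'' → rB b b'') :
    ∀ ⦃l m k : MP p d n⦄, dom rB l m → dom rB m k → dom rB l k
  | .single _, .single _, .single _, h, g => ht h g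
  | .double .., .single _, .single _, h, g => ht h g
  | .double .., .double .., .single _, h, g => ht h.1 g
  | .double .., .double .., .double .., ⟨h₁₃, h₂₄, hc⟩, ⟨g₃₅, g₄₆, gc⟩ =>
    ⟨ht h₁₃ g₃₅, ht h₂₄ g₄₆, ImbalanceLE.trans (ht · g₃₅) (ht h₂₄) hc gc⟩

end Dominance

theorem dom_bLE_isPartialOrder (p d n : ℕ) :
    (∀ l : MP p d n, dom bLE l l) ∧
    (∀ l m : MP p d n, dom bLE l m → dom bLE m l → l = m) ∧
    (∀ l m k : MP p d n, dom bLE l m → dom bLE m k → dom bLE l k) :=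
  ⟨dom_refl bLE_refl, dom_antisymm (fun _ _ => bLE_antisymm) (fun _ _ => not_bLE_of_bLT),
    dom_trans (fun _ _ _ => bLE_trans)⟩
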